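/- Let $s_1, s_2, w_1, w_2, q_1, q_2$ be positive reals with $w_1 + w_2 = 1$, and define $\psi_1, \psi_2$ as in equations (28) and (34) of the paper: $\psi_1 = \frac{s_1 q_2 - q_1 s_2 + (w_1+1)s_1^2 s_2 - w_2 s_2^2 s_1}{s_1 w_2}$ and $\psi_2 = \frac{s_2 q_1 - q_2 s_1 + (w_2+1)s_2^2 s_1 - w_1 s_1^2 s_2}{s_2 w_1}$. Then it is impossible that both $\psi_1 > (s_1+s_2)^2$ and $\psi_2 > (s_1+s_2)^2$ hold. -/
import Mathlib

/-- Theorem 1 (mutual exclusion): `ψ₁ > (s₁+s₂)²` and `ψ₂ > (s₁+s₂)²` cannot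
both hold. -/
theorem stmt_8 (s₁ s₂ w₁ w₂ q₁ q₂ ψ₁ ψ₂ : ℝ)
    (hs₁ : 0 < s₁) (hs₂ : 0 < s₂) (hw₁ : 0 < w₁) (hw₂ : 0 < w₂)
    (hq₁ : 0 < q₁) (hq₂ : 0 < q₂) (hw : w₁ + w₂ = 1)
    (hψ₁ : ψ₁ = (s₁ * q₂ - q₁ * s₂ + (w₁ + 1) * s₁ ^ 2 * s₂ - w₂ * s₂ ^ 2 * s₁)
      / (s₁ * w₂))
    (hψ₂ : ψ₂ = (s₂ * q₁ - q₂ * s₁ + (w₂ + 1) * s₂ ^ 2 * s₁ - w₁ * s₁ ^ 2 * s₂)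
      / (s₂ * w₁)) :
    ¬ ((s₁ + s₂) ^ 2 < ψ₁ ∧ (s₁ + s₂) ^ 2 < ψ₂) := by
  rintro ⟨h1, h2⟩
  rw [hψ₁, lt_div_iff₀ (by positivity)] at h1
  rw [hψ₂, lt_div_iff₀ (by positivity)] at h2
  have hw2 : w₂ = 1 - w₁ := by linarith
  have key : s₁ * s₂ * (s₁ + s₂) ≤ (s₁ + s₂) ^ 2 * (s₁ * w₂ + s₂ * w₁) := by
    rw [hw2]
    nlinarith [mul_nonneg (mul_nonneg hw₂.le (sq_nonneg s₁)) (add_pos hs₁ hs₂).le,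
      mul_nonneg (mul_nonneg hw₁.le (sq_nonneg s₂)) (add_pos hs₁ hs₂).le]
  nlinarith [h1, h2, key]
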